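/- Let (X_k) be a family of random variables that is uniformly integrable. Then there exists a convex, increasing function Φ: [0,∞) → [0,∞) with Φ(0)=0 and lim_{x→∞} Φ(x)/x = ∞ such that sup_k E[Φ(|X_k|)] < ∞ (de La Vallée-Poussin criterion, necessity direction). -/

import Mathlib

/-!
Uniform integrability gives thresholds `C n → ∞` with `E[(|X_k| - C n)⁺] ≤ 2⁻ⁿ` for all `k`.
Take `Φ x = ∑ₙ (x - C n)⁺`: a sum of convex increasing hinges, each vanishing at `0`, and
`Φ x ≥ N x - (C 0 + ⋯ + C (N-1))` for every `N`, so `Φ x / x → ∞`. Integrating termwise,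
`E[Φ |X_k|] ≤ ∑ₙ 2⁻ⁿ = 2` uniformly in `k`.
-/

open MeasureTheory Filter Set

/-- Uniform integrability of a family: sup of tail expectations tends to 0. -/
def UnifInt {Ω ι : Type*} [MeasurableSpace Ω] (μ : Measure Ω) (f : ι → Ω → ℝ) : Prop :=
  ∀ ε : ℝ, 0 < ε → ∃ C : ℝ, 0 < C ∧ ∀ i, ∫ ω in {ω | C < |f i ω|}, |f i ω| ∂μ ≤ ε

noncomputable def hingeSum (C : ℕ → ℝ) (x : ℝ) : ℝ := ∑' n, max (x - C n) 0

section hingeSum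

variable {C : ℕ → ℝ}

lemma summable_hinge (hC : Tendsto C atTop atTop) (x : ℝ) :
    Summable fun n => max (x - C n) 0 := by
  obtain ⟨N, hN⟩ := eventually_atTop.mp (hC.eventually_ge_atTop x)
  refine summable_of_ne_finset_zero (s := Finset.range N) fun n hn => ?_
  exact max_eq_right (sub_nonpos.mpr (hN n (by simpa using hn)))

lemma hingeSum_nonneg (x : ℝ) : 0 ≤ hingeSum C x :=
  tsum_nonneg fun _ => le_max_right _ _

lemma hingeSum_zero (hC : ∀ n, 0 ≤ C n) : hingeSum C 0 = 0 := by
  simp [hingeSum, hC]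

lemma monotone_hingeSum (hC : Tendsto C atTop atTop) : Monotone (hingeSum C) := fun _ _ hxy =>
  (summable_hinge hC _).tsum_le_tsum (fun _ => max_le_max (by linarith) le_rfl)
    (summable_hinge hC _)

lemma convexOn_hingeSum (hC : Tendsto C atTop atTop) : ConvexOn ℝ univ (hingeSum C) := by
  refine ⟨convex_univ, fun x _ y _ a b ha hb hab => ?_⟩
  have hx := (summable_hinge hC x).mul_left a
  have hy := (summable_hinge hC y).mul_left b
  calc hingeSum C (a • x + b • y)
      ≤ ∑' n, (a * max (x - C n) 0 + b * max (y - C n) 0) := by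
        refine (summable_hinge hC _).tsum_le_tsum (fun n => max_le ?_ (by positivity)) (hx.add hy)
        have : a • x + b • y - C n = a * (x - C n) + b * (y - C n) := by
          simp only [smul_eq_mul]; linear_combination C n * hab
        rw [this]
        gcongr <;> exact le_max_left _ _
    _ = a • hingeSum C x + b • hingeSum C y := by
        rw [hx.tsum_add hy, tsum_mul_left, tsum_mul_left]; rfl

lemma sum_range_sub_le_hingeSum (hC : Tendsto C atTop atTop) (N : ℕ) (x : ℝ) :
    ∑ n ∈ Finset.range N, (x - C n) ≤ hingeSum C x :=
  (Finset.sum_le_sum fun _ _ => le_max_left _ _).trans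
    ((summable_hinge hC x).sum_le_tsum _ fun _ _ => le_max_right _ _)

lemma tendsto_hingeSum_div_atTop (hC : Tendsto C atTop atTop) :
    Tendsto (fun x => hingeSum C x / x) atTop atTop := by
  refine tendsto_atTop.mpr fun b => ?_
  set N := ⌈b⌉₊ + 1
  set S := ∑ n ∈ Finset.range N, C n
  filter_upwards [eventually_ge_atTop (max S 1)] with x hx
  have hx0 : 0 < x := by linarith [le_max_right S 1]
  have hSx : S / x ≤ 1 := (div_le_one hx0).mpr (le_of_max_le_left hx)
  have hbN : b + 1 ≤ N := by push_cast [N]; linarith [Nat.le_ceil b]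
  calc b ≤ N - S / x := by linarith
    _ = (∑ n ∈ Finset.range N, (x - C n)) / x := by
        rw [Finset.sum_sub_distrib, Finset.sum_const, Finset.card_range, nsmul_eq_mul]
        field_simp
        rfl
    _ ≤ hingeSum C x / x := by gcongr; exact sum_range_sub_le_hingeSum hC N x

end hingeSum

section integral

variable {Ω : Type*} [MeasurableSpace Ω] {μ : Measure Ω} {f : Ω → ℝ} {c : ℝ}

lemma MeasureTheory.Integrable.max_sub_const_zero (hf : Integrable f μ) (hc : 0 ≤ c) :
    Integrable (fun ω => max (f ω - c) 0) μ := by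
  refine hf.mono ((hf.1.sub aestronglyMeasurable_const).sup aestronglyMeasurable_const)
    (Eventually.of_forall fun ω => ?_)
  simp only [Real.norm_eq_abs]
  rw [abs_of_nonneg (le_max_right _ _)]
  exact max_le (by linarith [le_abs_self (f ω)]) (abs_nonneg _)

lemma integral_hinge_abs_le_setIntegral (hf : Integrable f μ) (hc : 0 ≤ c) :
    ∫ ω, max (|f ω| - c) 0 ∂μ ≤ ∫ ω in {ω | c < |f ω|}, |f ω| ∂μ := by
  rw [← setIntegral_eq_integral_of_forall_compl_eq_zero fun ω hω =>
    max_eq_right (sub_nonpos.mpr (not_lt.mp hω))]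
  exact setIntegral_mono (hf.abs.max_sub_const_zero hc).integrableOn hf.abs.integrableOn
    fun ω => max_le (by linarith) (abs_nonneg _)

lemma integral_hingeSum_le (hf : Integrable f μ) {C : ℕ → ℝ} (hC : ∀ n, 0 ≤ C n)
    {ε : ℕ → ℝ} (hε : Summable ε) (hfC : ∀ n, ∫ ω, max (f ω - C n) 0 ∂μ ≤ ε n) :
    ∫ ω, hingeSum C (f ω) ∂μ ≤ ∑' n, ε n := by
  have hnorm (n : ℕ) (ω : Ω) : ‖max (f ω - C n) 0‖ = max (f ω - C n) 0 :=
    Real.norm_of_nonneg (le_max_right _ _)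
  have hsum : Summable fun n => ∫ ω, max (f ω - C n) 0 ∂μ :=
    hε.of_nonneg_of_le (fun n => integral_nonneg fun _ => le_max_right _ _) hfC
  unfold hingeSum
  rw [← integral_tsum_of_summable_integral_norm (fun n => hf.max_sub_const_zero (hC n))
    (by simpa only [hnorm] using hsum)]
  exact hsum.tsum_le_tsum hfC hε

end integral

lemma UnifInt.exists_hinge_bounds {Ω I : Type*} [MeasurableSpace Ω] {μ : Measure Ω}
    {X : I → Ω → ℝ} (hX : ∀ k, Integrable (X k) μ) (hUI : UnifInt μ X) :
    ∃ C : ℕ → ℝ, Tendsto C atTop atTop ∧ (∀ n, 0 ≤ C n) ∧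
      ∀ n k, ∫ ω, max (|X k ω| - C n) 0 ∂μ ≤ (1 / 2) ^ n := by
  choose C' hC'pos hC' using fun n : ℕ => hUI ((1 / 2) ^ n) (by positivity)
  refine ⟨fun n => max (C' n) n, tendsto_atTop_mono (fun n => le_max_right _ _)
    tendsto_natCast_atTop_atTop, fun n => (hC'pos n).le.trans (le_max_left _ _), fun n k => ?_⟩
  calc ∫ ω, max (|X k ω| - max (C' n) n) 0 ∂μ
      ≤ ∫ ω in {ω | max (C' n) n < |X k ω|}, |X k ω| ∂μ :=
        integral_hinge_abs_le_setIntegral (hX k) ((hC'pos n).le.trans (le_max_left _ _))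
    _ ≤ ∫ ω in {ω | C' n < |X k ω|}, |X k ω| ∂μ :=
        setIntegral_mono_set (hX k).abs.integrableOn (Eventually.of_forall fun _ => abs_nonneg _)
          (Eventually.of_forall fun _ hω => (le_max_left _ _).trans_lt hω)
    _ ≤ (1 / 2) ^ n := hC' n k

theorem stmt_5_general {Ω I : Type*} [MeasurableSpace Ω] (μ : Measure Ω)
    (X : I → Ω → ℝ)
    (hXint : ∀ k, Integrable (X k) μ)
    (hUI : UnifInt μ X) :
    ∃ Φ : ℝ → ℝ,
      ConvexOn ℝ (Set.Ici (0 : ℝ)) Φ ∧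
      MonotoneOn Φ (Set.Ici (0 : ℝ)) ∧
      Φ 0 = 0 ∧
      (∀ x : ℝ, 0 ≤ x → 0 ≤ Φ x) ∧
      Tendsto (fun x : ℝ => Φ x / x) atTop atTop ∧
      ∃ M : ℝ, ∀ k, ∫ ω, Φ |X k ω| ∂μ ≤ M := by
  obtain ⟨C, hC, hC0, hCX⟩ := hUI.exists_hinge_bounds hXint
  refine ⟨hingeSum C, (convexOn_hingeSum hC).subset (subset_univ _) (convex_Ici 0),
    (monotone_hingeSum hC).monotoneOn _, hingeSum_zero hC0, fun x _ => hingeSum_nonneg x,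
    tendsto_hingeSum_div_atTop hC, ∑' n : ℕ, (1 / 2 : ℝ) ^ n, fun k => ?_⟩
  exact integral_hingeSum_le (hXint k).abs hC0
    (summable_geometric_of_lt_one (by norm_num) (by norm_num)) (hCX · k)

/-- de La Vallée-Poussin criterion, necessity direction. -/
theorem stmt_5 {Ω I : Type*} [MeasurableSpace Ω] (μ : Measure Ω) [IsProbabilityMeasure μ]
    (X : I → Ω → ℝ)
    (hXmeas : ∀ k, AEStronglyMeasurable (X k) μ)
    (hXint : ∀ k, Integrable (X k) μ)
    (hUI : UnifInt μ X) :
    ∃ Φ : ℝ → ℝ,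
      ConvexOn ℝ (Set.Ici (0 : ℝ)) Φ ∧
      MonotoneOn Φ (Set.Ici (0 : ℝ)) ∧
      Φ 0 = 0 ∧
      (∀ x : ℝ, 0 ≤ x → 0 ≤ Φ x) ∧
      Tendsto (fun x : ℝ => Φ x / x) atTop atTop ∧
      ∃ M : ℝ, ∀ k, ∫ ω, Φ |X k ω| ∂μ ≤ M :=
  stmt_5_general μ X hXint hUI
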